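/- Let β > 0, γ ≥ 0 with β + γ < 1. For ξ ∈ ℝ³ and ρ > 0, define I²_{β,γ}(ξ,ρ) := ∫_{S²} (|ξ|²+ρ²)^{2γ} / ( |ξ−ρω|^{2β+2γ} |ξ+ρω|^{2β+2γ} ) dω, the integral being with respect to the surface measure on the unit sphere S² ⊂ ℝ³. Then there exist constants 0 < c_{β,γ} ≤ C_{β,γ} < ∞ such that for all ξ ∈ ℝ³ and ρ > 0: c_{β,γ}·(|ξ|²+ρ²)^{−2β} ≤ I²_{β,γ}(ξ,ρ) ≤ C_{β,γ}·(|ξ|²+ρ²)^{−2β}. -/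

import Mathlib

open MeasureTheory Complex ENNReal RealInnerProductSpace

noncomputable section

abbrev E3 : Type := EuclideanSpace ℝ (Fin 3)

/-- Space-time Fourier transform on `ℝ × ℝ³ × ℝ³`. -/
def FT3 (F : ℝ × E3 × E3 → ℂ) (p : ℝ × E3 × E3) : ℂ :=
  ∫ q : ℝ × E3 × E3,
    Complex.exp (-Complex.I * Complex.ofReal
      (q.1 * p.1 + ⟪q.2.1, p.2.1⟫ + ⟪q.2.2, p.2.2⟫)) * F q

/-- Inverse space-time Fourier transform on `ℝ × ℝ³ × ℝ³`. -/
def IFT3 (F : ℝ × E3 × E3 → ℂ) (p : ℝ × E3 × E3) : ℂ :=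
  Complex.ofReal (((2 * Real.pi) ^ 7)⁻¹) *
  ∫ q : ℝ × E3 × E3,
    Complex.exp (Complex.I * Complex.ofReal
      (q.1 * p.1 + ⟪q.2.1, p.2.1⟫ + ⟪q.2.2, p.2.2⟫)) * F q

/-- Fourier multiplier with (real) symbol `m` on space-time functions. -/
def mult3 (m : ℝ × E3 × E3 → ℝ) (F : ℝ × E3 × E3 → ℂ) : ℝ × E3 × E3 → ℂ :=
  IFT3 fun p => Complex.ofReal (m p) * FT3 F p

/-- Fourier transform on `ℝ × ℝ³`. -/
def FT2 (f : ℝ × E3 → ℂ) (p : ℝ × E3) : ℂ :=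
  ∫ q : ℝ × E3,
    Complex.exp (-Complex.I * Complex.ofReal (q.1 * p.1 + ⟪q.2, p.2⟫)) * f q

def IFT2 (f : ℝ × E3 → ℂ) (p : ℝ × E3) : ℂ :=
  Complex.ofReal (((2 * Real.pi) ^ 4)⁻¹) *
  ∫ q : ℝ × E3,
    Complex.exp (Complex.I * Complex.ofReal (q.1 * p.1 + ⟪q.2, p.2⟫)) * f q

def mult2 (m : ℝ × E3 → ℝ) (f : ℝ × E3 → ℂ) : ℝ × E3 → ℂ :=
  IFT2 fun p => Complex.ofReal (m p) * FT2 f p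

/-- Fourier transform on `ℝ³`. -/
def FTx (f : E3 → ℂ) (ξ : E3) : ℂ :=
  ∫ x : E3, Complex.exp (-Complex.I * Complex.ofReal ⟪x, ξ⟫) * f x

def IFTx (f : E3 → ℂ) (ξ : E3) : ℂ :=
  Complex.ofReal (((2 * Real.pi) ^ 3)⁻¹) *
  ∫ x : E3, Complex.exp (Complex.I * Complex.ofReal ⟪x, ξ⟫) * f x

def multx (m : E3 → ℝ) (f : E3 → ℂ) : E3 → ℂ :=
  IFTx fun ξ => Complex.ofReal (m ξ) * FTx f ξ

/-- Fourier transform on `ℝ³ × ℝ³`. -/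
def FTxy (g : E3 × E3 → ℂ) (q : E3 × E3) : ℂ :=
  ∫ r : E3 × E3,
    Complex.exp (-Complex.I * Complex.ofReal (⟪r.1, q.1⟫ + ⟪r.2, q.2⟫)) * g r

def IFTxy (g : E3 × E3 → ℂ) (q : E3 × E3) : ℂ :=
  Complex.ofReal (((2 * Real.pi) ^ 6)⁻¹) *
  ∫ r : E3 × E3,
    Complex.exp (Complex.I * Complex.ofReal (⟪r.1, q.1⟫ + ⟪r.2, q.2⟫)) * g r

def multxy (m : E3 × E3 → ℝ) (g : E3 × E3 → ℂ) : E3 × E3 → ℂ :=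
  IFTxy fun q => Complex.ofReal (m q) * FTxy g q

/-- `⟨∇_x⟩^a ⟨∇_y⟩^b` on space-time functions. -/
def opJxy (a b : ℝ) : (ℝ × E3 × E3 → ℂ) → ℝ × E3 × E3 → ℂ :=
  mult3 fun p => (1 + ‖p.2.1‖ ^ 2) ^ (a / 2) * (1 + ‖p.2.2‖ ^ 2) ^ (b / 2)

/-- `⟨∇_x⟩^a` on functions of `(t,x)`. -/
def opJx2 (a : ℝ) : (ℝ × E3 → ℂ) → ℝ × E3 → ℂ :=
  mult2 fun p => (1 + ‖p.2‖ ^ 2) ^ (a / 2)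

/-- `|∂_t|^s` on functions of `(t,x)`. -/
def opDt2 (s : ℝ) : (ℝ × E3 → ℂ) → ℝ × E3 → ℂ :=
  mult2 fun p => |p.1| ^ s

/-- `|∇_x|^s` on functions of `(t,x)`. -/
def opDx2 (s : ℝ) : (ℝ × E3 → ℂ) → ℝ × E3 → ℂ :=
  mult2 fun p => ‖p.2‖ ^ s

/-- `⟨∇_x⟩^a |∇_x|^s` on functions of `(t,x)`. -/
def opJDx2 (a s : ℝ) : (ℝ × E3 → ℂ) → ℝ × E3 → ℂ :=
  mult2 fun p => (1 + ‖p.2‖ ^ 2) ^ (a / 2) * ‖p.2‖ ^ s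

/-- `⟨∇_x⟩^a ⟨∇_y⟩^b` on functions of `(x,y)`. -/
def opJxy0 (a b : ℝ) : (E3 × E3 → ℂ) → E3 × E3 → ℂ :=
  multxy fun q => (1 + ‖q.1‖ ^ 2) ^ (a / 2) * (1 + ‖q.2‖ ^ 2) ^ (b / 2)

/-- `|∇_x|^s |∇_y|^{s'}` on functions of `(x,y)`. -/
def opDxy0 (s s' : ℝ) : (E3 × E3 → ℂ) → E3 × E3 → ℂ :=
  multxy fun q => ‖q.1‖ ^ s * ‖q.2‖ ^ s'

/-- `⟨∇⟩^a` on functions of `x`. -/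
def opJx0 (a : ℝ) : (E3 → ℂ) → E3 → ℂ :=
  multx fun ξ => (1 + ‖ξ‖ ^ 2) ^ (a / 2)

/-- `‖F‖_{X^δ}` with weight `⟨τ + |ξ|² + |η|²⟩^δ`. -/
def Xnorm (δ : ℝ) (F : ℝ × E3 × E3 → ℂ) : ℝ≥0∞ :=
  (∫⁻ p : ℝ × E3 × E3,
      ENNReal.ofReal ((1 + (p.1 + ‖p.2.1‖ ^ 2 + ‖p.2.2‖ ^ 2) ^ 2) ^ δ) *
        (‖FT3 F p‖₊ : ℝ≥0∞) ^ 2) ^ (1 / 2 : ℝ)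

/-- `‖F‖_{X_±^δ}` with weight `⟨τ + |ξ|² − |η|²⟩^δ`. -/
def XnormPM (δ : ℝ) (F : ℝ × E3 × E3 → ℂ) : ℝ≥0∞ :=
  (∫⁻ p : ℝ × E3 × E3,
      ENNReal.ofReal ((1 + (p.1 + ‖p.2.1‖ ^ 2 - ‖p.2.2‖ ^ 2) ^ 2) ^ δ) *
        (‖FT3 F p‖₊ : ℝ≥0∞) ^ 2) ^ (1 / 2 : ℝ)

/-- One space variable `X^δ` norm, weight `⟨τ + |ξ|²⟩^δ`. -/
def Xnorm2 (δ : ℝ) (f : ℝ × E3 → ℂ) : ℝ≥0∞ :=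
  (∫⁻ p : ℝ × E3,
      ENNReal.ofReal ((1 + (p.1 + ‖p.2‖ ^ 2) ^ 2) ^ δ) *
        (‖FT2 f p‖₊ : ℝ≥0∞) ^ 2) ^ (1 / 2 : ℝ)

/-- `‖F‖_{L^p(dt)L^q(dx)L²(dy)}`. -/
def mixedNorm (p q : ℝ≥0∞) (F : ℝ × E3 × E3 → ℂ) : ℝ≥0∞ :=
  eLpNorm (fun t : ℝ =>
    (eLpNorm (fun x : E3 =>
      (eLpNorm (fun y : E3 => F (t, x, y)) 2 volume).toReal) q volume).toReal) p volume

/-- `‖F‖_{L^p(dt)L^q(dy)L²(dx)}` (the roles of `x` and `y` interchanged). -/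
def mixedNormSwap (p q : ℝ≥0∞) (F : ℝ × E3 × E3 → ℂ) : ℝ≥0∞ :=
  eLpNorm (fun t : ℝ =>
    (eLpNorm (fun y : E3 =>
      (eLpNorm (fun x : E3 => F (t, x, y)) 2 volume).toReal) q volume).toReal) p volume

/-- `‖f‖_{L^p(dt)L^q(dx)}`. -/
def mixed2Norm (p q : ℝ≥0∞) (f : ℝ × E3 → ℂ) : ℝ≥0∞ :=
  eLpNorm (fun t : ℝ => (eLpNorm (fun x : E3 => f (t, x)) q volume).toReal) p volume

/-- Characteristic function of `[0,T]`. -/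
def cchar (T t : ℝ) : ℝ := if t ∈ Set.Icc 0 T then 1 else 0

/-- Multiplication by the characteristic function of `[0,T]` in time. -/
def cT (T : ℝ) (F : ℝ × E3 × E3 → ℂ) : ℝ × E3 × E3 → ℂ :=
  fun p => Complex.ofReal (cchar T p.1) * F p

def cT2 (T : ℝ) (f : ℝ × E3 → ℂ) : ℝ × E3 → ℂ :=
  fun p => Complex.ofReal (cchar T p.1) * f p

/-- Restriction `(t,x) ↦ F(t,x,x+w)`. -/
def collapsePlus (w : E3) (F : ℝ × E3 × E3 → ℂ) : ℝ × E3 → ℂ :=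
  fun p => F (p.1, p.2, p.2 + w)

/-- Restriction `(t,x) ↦ F(t,x+w,x−w)`. -/
def collapsePM (w : E3) (F : ℝ × E3 × E3 → ℂ) : ℝ × E3 → ℂ :=
  fun p => F (p.1, p.2 + w, p.2 - w)

/-- Restriction `(t,x) ↦ F(t,x+z,x)`. -/
def collapseShift (z : E3) (F : ℝ × E3 × E3 → ℂ) : ℝ × E3 → ℂ :=
  fun p => F (p.1, p.2 + z, p.2)

/-- The norm `N_T(Λ)`. -/
def NTnorm (α T : ℝ) (Λ : ℝ × E3 × E3 → ℂ) : ℝ≥0∞ :=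
  mixedNorm 2 6 (opJxy α α (cT T Λ)) + mixedNorm ⊤ 2 (opJxy α α (cT T Λ)) +
  mixedNormSwap 2 6 (opJxy α α (cT T Λ)) + mixedNormSwap ⊤ 2 (opJxy α α (cT T Λ)) +
  (⨆ w : E3, eLpNorm (opJx2 α (collapsePlus w (cT T Λ))) 2 volume) +
  (⨆ w : E3, eLpNorm (opDt2 (1 / 4) (collapsePlus w (cT T Λ))) 2 volume)

/-- The norm `Ṅ_T(Γ)`. -/
def NTdotNorm (α T : ℝ) (Γ : ℝ × E3 × E3 → ℂ) : ℝ≥0∞ :=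
  mixedNorm 2 6 (opJxy α α (cT T Γ)) + mixedNormSwap 2 6 (opJxy α α (cT T Γ)) +
  mixedNorm ⊤ 2 (opJxy α α (cT T Γ)) +
  (⨆ w : E3, eLpNorm (opJDx2 (α - 1 / 2) (1 / 2) (collapsePlus w (cT T Γ))) 2 volume)

/-- The norm `N_T(φ)`. -/
def NTphiNorm (α T : ℝ) (φ : ℝ × E3 → ℂ) : ℝ≥0∞ :=
  mixed2Norm 2 6 (opJx2 α (cT2 T φ)) + mixed2Norm ⊤ 2 (opJx2 α (cT2 T φ))

/-- Laplacian of a function on `ℝ³`, as the sum of second derivatives along coordinates. -/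
def lapE (f : E3 → ℂ) (x : E3) : ℂ :=
  ∑ i : Fin 3, iteratedDeriv 2 (fun s : ℝ => f (x + s • EuclideanSpace.single i (1 : ℝ))) 0

/-- Rescaled potential `v_N(x) = N^{3β} v(N^β x)`. -/
def vNf (v : E3 → ℂ) (β : ℝ) (N : ℕ) (x : E3) : ℂ :=
  Complex.ofReal ((N : ℝ) ^ (3 * β)) * v (((N : ℝ) ^ β) • x)

/-- The `φ` equation of the HFB system. -/
def HFBphi (v : E3 → ℂ) (β : ℝ) (N : ℕ)
    (φ : ℝ × E3 → ℂ) (Λ Γ : ℝ × E3 × E3 → ℂ) : Prop :=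
  ∀ (t : ℝ) (x₁ : E3),
    (1 / Complex.I) * deriv (fun s => φ (s, x₁)) t - lapE (fun x => φ (t, x)) x₁
    = -(∫ y : E3, vNf v β N (x₁ - y) * Γ (t, y, y)) * φ (t, x₁)
      - ∫ y : E3, vNf v β N (x₁ - y) *
          (φ (t, y) * (Γ (t, y, x₁) - (starRingEnd ℂ) (φ (t, y)) * φ (t, x₁))
            + (starRingEnd ℂ) (φ (t, y)) * (Λ (t, x₁, y) - φ (t, x₁) * φ (t, y)))

/-- The `Λ` equation of the HFB system. -/
def HFBLambda (v : E3 → ℂ) (β : ℝ) (N : ℕ)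
    (φ : ℝ × E3 → ℂ) (Λ Γ : ℝ × E3 × E3 → ℂ) : Prop :=
  ∀ (t : ℝ) (x₁ x₂ : E3),
    (1 / Complex.I) * deriv (fun s => Λ (s, x₁, x₂)) t
      - lapE (fun x => Λ (t, x, x₂)) x₁ - lapE (fun y => Λ (t, x₁, y)) x₂
      + ((N : ℂ))⁻¹ * vNf v β N (x₁ - x₂) * Λ (t, x₁, x₂)
    = -(∫ y : E3, (vNf v β N (x₁ - y) + vNf v β N (x₂ - y)) * Γ (t, y, y)) * Λ (t, x₁, x₂)
      - (∫ y : E3, (vNf v β N (x₁ - y) + vNf v β N (x₂ - y)) *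
          (Λ (t, x₁, y) * Γ (t, y, x₂) + (starRingEnd ℂ) (Γ (t, x₁, y)) * Λ (t, y, x₂)))
      + 2 * (∫ y : E3, (vNf v β N (x₁ - y) + vNf v β N (x₂ - y)) *
          Complex.ofReal (‖φ (t, y)‖ ^ 2)) * φ (t, x₁) * φ (t, x₂)

/-- The `Γ̄` equation of the HFB system. -/
def HFBGamma (v : E3 → ℂ) (β : ℝ) (N : ℕ)
    (φ : ℝ × E3 → ℂ) (Λ Γ : ℝ × E3 × E3 → ℂ) : Prop :=
  ∀ (t : ℝ) (x₁ x₂ : E3),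
    (1 / Complex.I) * deriv (fun s => (starRingEnd ℂ) (Γ (s, x₁, x₂))) t
      - lapE (fun x => (starRingEnd ℂ) (Γ (t, x, x₂))) x₁
      + lapE (fun y => (starRingEnd ℂ) (Γ (t, x₁, y))) x₂
    = -(∫ y : E3, (vNf v β N (x₁ - y) - vNf v β N (x₂ - y)) *
          (Λ (t, x₁, y) * (starRingEnd ℂ) (Λ (t, y, x₂))
            + (starRingEnd ℂ) (Γ (t, x₁, y)) * (starRingEnd ℂ) (Γ (t, y, x₂))
            + (starRingEnd ℂ) (Γ (t, y, y)) * (starRingEnd ℂ) (Γ (t, x₁, x₂))))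
      + 2 * (∫ y : E3, (vNf v β N (x₁ - y) - vNf v β N (x₂ - y)) *
          Complex.ofReal (‖φ (t, y)‖ ^ 2)) * φ (t, x₁) * (starRingEnd ℂ) (φ (t, x₂))

/-- Solutions of the full HFB system. -/
def IsHFB (v : E3 → ℂ) (β : ℝ) (N : ℕ)
    (φ : ℝ × E3 → ℂ) (Λ Γ : ℝ × E3 × E3 → ℂ) : Prop :=
  HFBphi v β N φ Λ Γ ∧ HFBLambda v β N φ Λ Γ ∧ HFBGamma v β N φ Λ Γ

/-- Free propagator `e^{itΔ}` on `ℝ³ × ℝ³`, the Fourier multiplier `e^{−it(|ξ|²+|η|²)}`. -/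
def freeProp (t : ℝ) (g : E3 × E3 → ℂ) : E3 × E3 → ℂ :=
  IFTxy fun q =>
    Complex.exp (-Complex.I * Complex.ofReal (t * (‖q.1‖ ^ 2 + ‖q.2‖ ^ 2))) * FTxy g q

/-- `∫ c(t−s) e^{−i(t−s)Δ} G(s) ds`. -/
def duhamelNeg (T : ℝ) (G : ℝ × E3 × E3 → ℂ) : ℝ × E3 × E3 → ℂ := fun p =>
  ∫ s : ℝ, Complex.ofReal (cchar T (p.1 - s)) *
    freeProp (-(p.1 - s)) (fun q => G (s, q.1, q.2)) (p.2.1, p.2.2)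

/-- `∫ c(t−s) e^{i(t−s)Δ} G(s) ds`. -/
def duhamelPos (T : ℝ) (G : ℝ × E3 × E3 → ℂ) : ℝ × E3 × E3 → ℂ := fun p =>
  ∫ s : ℝ, Complex.ofReal (cchar T (p.1 - s)) *
    freeProp (p.1 - s) (fun q => G (s, q.1, q.2)) (p.2.1, p.2.2)

/-- The one-dimensional Fourier transform of the characteristic function of `[0,T]`. -/
def chatC (T u : ℝ) : ℂ :=
  ∫ t : ℝ, Complex.ofReal (cchar T t) * Complex.exp (-Complex.I * Complex.ofReal (t * u))

/-- `P_{|ξ−η| ≲ N^{β'}}`: the Fourier multiplier `φ₀(|ξ−η|/2^I)`. -/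
def PloMinus (φ₀ : ℝ → ℝ) (I : ℤ) : (ℝ × E3 × E3 → ℂ) → ℝ × E3 × E3 → ℂ :=
  mult3 fun p => φ₀ (‖p.2.1 - p.2.2‖ / 2 ^ I)

/-- `P_{|ξ+η| ≲ N^{β'}}`. -/
def PloPlus (φ₀ : ℝ → ℝ) (I : ℤ) : (ℝ × E3 × E3 → ℂ) → ℝ × E3 × E3 → ℂ :=
  mult3 fun p => φ₀ (‖p.2.1 + p.2.2‖ / 2 ^ I)

/-- `P_{|ξ−η| ≳ N^{β'}} = Id − P_{|ξ−η| ≲ N^{β'}}`. -/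
def PhiMinus (φ₀ : ℝ → ℝ) (I : ℤ) (F : ℝ × E3 × E3 → ℂ) : ℝ × E3 × E3 → ℂ :=
  fun p => F p - PloMinus φ₀ I F p

/-- `P_{|ξ+η| ≳ N^{β'}} = Id − P_{|ξ+η| ≲ N^{β'}}`. -/
def PhiPlus (φ₀ : ℝ → ℝ) (I : ℤ) (F : ℝ × E3 × E3 → ℂ) : ℝ × E3 × E3 → ℂ :=
  fun p => F p - PloPlus φ₀ I F p

/-- Sharp cutoff `P_{|ξ−η|<M}`. -/
def PsharpMinus (M : ℝ) : (ℝ × E3 × E3 → ℂ) → ℝ × E3 × E3 → ℂ :=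
  mult3 fun p => if ‖p.2.1 - p.2.2‖ < M then 1 else 0

/-- The spherical integral `I²_{β,γ}(ξ,ρ)`, with respect to the standard surface
measure (two-dimensional Hausdorff measure) on the unit sphere `S² ⊂ ℝ³`. -/
def Isq (β γ : ℝ) (ξ : E3) (ρ : ℝ) : ℝ :=
  ∫ ω in Metric.sphere (0 : E3) 1,
    (‖ξ‖ ^ 2 + ρ ^ 2) ^ (2 * γ) /
      (‖ξ - ρ • ω‖ ^ (2 * β + 2 * γ) * ‖ξ + ρ • ω‖ ^ (2 * β + 2 * γ)) ∂μH[2]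

/-!
Write `R = ‖ξ‖² + ρ²` and `s = 2β + 2γ`. For `ω ∈ S²` the parallelogram law gives
`‖ξ - ρω‖² + ‖ξ + ρω‖² = 2R`, so `‖ξ - ρω‖ ‖ξ + ρω‖ ≤ R` and the integrand is at least
`R^{2γ - s} = R^{-2β}` off the two points `ω = ±ξ/ρ`. Conversely the larger of the two factors is at
least `√R`, so the integrand is at most `R^{γ-β} (‖ξ - ρω‖^{-s} + ‖ξ + ρω‖^{-s})`, and the upper
bound reduces to the potential estimate `∫_{S²} ‖v - ρω‖^{-s} dω ≲ (‖v‖² + ρ²)^{-s/2}` for `s < 2`.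
After rescaling, this follows from a dyadic decomposition around the singularity together with the
cap bound `μH[2] (S² ∩ closedBall p r) ≲ r²`; the caps near the north pole are Lipschitz images of
planar discs under the graph chart `u ↦ (u, √(1 - ‖u‖²))`, and reflections move any cap there.
-/

open Metric Set

local notation "𝕊" => sphere (0 : E3) 1

theorem lintegral_dist_rpow_neg_le_of_measure_closedBall_le
    {X : Type*} [PseudoMetricSpace X] [MeasurableSpace X] [OpensMeasurableSpace X]
    {μ : Measure X} {c : X} {K s : ℝ} {d : ℕ} (hK : 0 ≤ K) (hs : 0 < s) (hsd : s < d)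
    (hμ : ∀ r, 0 < r → r ≤ 1 → μ (closedBall c r) ≤ ENNReal.ofReal (K * r ^ d)) :
    ∫⁻ x, ENNReal.ofReal (dist x c ^ (-s)) ∂μ ≤
      μ univ + ENNReal.ofReal (K * 2 ^ s / (1 - 2 ^ s / 2 ^ d)) := by
  set q : ℝ := 2 ^ s / 2 ^ d
  have hq : q < 1 := by
    rw [div_lt_one (by positivity), ← Real.rpow_natCast]
    exact Real.rpow_lt_rpow_of_exponent_lt one_lt_two hsd
  -- on the dyadic shell `2⁻ⁿ⁻¹ < dist x c ≤ 2⁻ⁿ` the kernel is at most `(2 ^ s) ^ (n + 1)`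
  have hpt : ∀ x, ENNReal.ofReal (dist x c ^ (-s)) ≤ 1 + ∑' n : ℕ,
      (closedBall c ((1 / 2) ^ n)).indicator (fun _ ↦ ENNReal.ofReal ((2 ^ s) ^ (n + 1))) x := by
    intro x
    rcases (dist_nonneg (x := x) (y := c)).eq_or_lt with h0 | hpos
    · simp [← h0, Real.zero_rpow (neg_ne_zero.2 hs.ne')]
    rcases le_or_gt 1 (dist x c) with h1 | h1
    · exact (ENNReal.ofReal_le_one.2 (Real.rpow_le_one_of_one_le_of_nonpos h1 (by linarith))).trans
        le_self_add
    obtain ⟨n, hn, hn'⟩ := exists_nat_pow_near_of_lt_one hpos h1.le one_half_pos one_half_lt_one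
    calc ENNReal.ofReal (dist x c ^ (-s)) ≤ ENNReal.ofReal ((2 ^ s) ^ (n + 1)) := by
          refine ENNReal.ofReal_le_ofReal ((Real.rpow_le_rpow_of_nonpos (by positivity) hn.le
            (by linarith)).trans_eq ?_)
          rw [one_div, inv_pow, Real.inv_rpow (by positivity), ← Real.rpow_pow_comm zero_le_two,
            Real.rpow_neg zero_le_two, inv_pow, inv_inv]
      _ = (closedBall c ((1 / 2) ^ n)).indicator
            (fun _ ↦ ENNReal.ofReal ((2 ^ s) ^ (n + 1))) x := by
          rw [indicator_of_mem (mem_closedBall.2 hn')]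
      _ ≤ _ := (ENNReal.le_tsum n).trans le_add_self
  calc ∫⁻ x, ENNReal.ofReal (dist x c ^ (-s)) ∂μ
      ≤ ∫⁻ x, 1 + ∑' n : ℕ, (closedBall c ((1 / 2) ^ n)).indicator
          (fun _ ↦ ENNReal.ofReal ((2 ^ s) ^ (n + 1))) x ∂μ := lintegral_mono hpt
    _ = μ univ + ∑' n : ℕ, ENNReal.ofReal ((2 ^ s) ^ (n + 1)) * μ (closedBall c ((1 / 2) ^ n)) := by
        rw [lintegral_add_left measurable_const, lintegral_one,
          lintegral_tsum fun n ↦ (measurable_const.indicator measurableSet_closedBall).aemeasurable]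
        simp_rw [lintegral_indicator_const measurableSet_closedBall]
    _ ≤ μ univ + ∑' n : ℕ, ENNReal.ofReal (K * 2 ^ s * q ^ n) := by
        gcongr with n
        calc ENNReal.ofReal ((2 ^ s) ^ (n + 1)) * μ (closedBall c ((1 / 2) ^ n))
            ≤ ENNReal.ofReal ((2 ^ s) ^ (n + 1)) * ENNReal.ofReal (K * ((1 / 2) ^ n) ^ d) :=
              by gcongr; exact hμ _ (by positivity) (pow_le_one₀ (by norm_num) (by norm_num))
          _ = ENNReal.ofReal (K * 2 ^ s * q ^ n) := by
              rw [← ENNReal.ofReal_mul (by positivity)]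
              congr 1
              simp only [q, div_pow, one_div, inv_pow, ← pow_mul, pow_succ]
              rw [mul_comm n d, pow_mul]
              field_simp
    _ = μ univ + ENNReal.ofReal (K * 2 ^ s / (1 - q)) := by
        have hq0 : 0 ≤ q := by positivity
        rw [← ENNReal.ofReal_tsum_of_nonneg (fun n ↦ by positivity)
          ((summable_geometric_of_lt_one hq0 hq).mul_left _), tsum_mul_left,
          tsum_geometric_of_lt_one hq0 hq, div_eq_mul_inv]

def sphereChart (u : ℝ × ℝ) : E3 := !₂[u.1, u.2, √(1 - u.1 ^ 2 - u.2 ^ 2)]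

def northPole : E3 := EuclideanSpace.single 2 1

lemma norm_sq_eq_sum_three (x : E3) : ‖x‖ ^ 2 = x 0 ^ 2 + x 1 ^ 2 + x 2 ^ 2 := by
  simp [EuclideanSpace.norm_sq_eq, Fin.sum_univ_three]

lemma sphereChart_mem_sphere {u : ℝ × ℝ} (hu : u.1 ^ 2 + u.2 ^ 2 ≤ 1) : sphereChart u ∈ 𝕊 := by
  rw [mem_sphere_zero_iff_norm, ← pow_eq_one_iff_of_nonneg (norm_nonneg _) two_ne_zero,
    norm_sq_eq_sum_three]
  simp [sphereChart, Real.sq_sqrt (by linarith : 0 ≤ 1 - u.1 ^ 2 - u.2 ^ 2)]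

lemma abs_sqrt_sub_sqrt_le {a b : ℝ} (ha : 1 / 4 ≤ a) (hb : 1 / 4 ≤ b) : |√a - √b| ≤ |a - b| := by
  have hsqrt : ∀ {x : ℝ}, 1 / 4 ≤ x → 1 / 2 ≤ √x := fun hx ↦
    Real.le_sqrt_of_sq_le (by linarith)
  have hfactor : a - b = (√a - √b) * (√a + √b) := by
    rw [mul_comm, ← sq_sub_sq, Real.sq_sqrt (by linarith), Real.sq_sqrt (by linarith)]
  rw [hfactor, abs_mul, abs_of_pos (by linarith [hsqrt ha, hsqrt hb] : 0 < √a + √b)]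
  exact le_mul_of_one_le_right (abs_nonneg _) (by linarith [hsqrt ha, hsqrt hb])

lemma lipschitzOnWith_sphereChart :
    LipschitzOnWith 5 sphereChart {u : ℝ × ℝ | u.1 ^ 2 + u.2 ^ 2 ≤ 3 / 4} := by
  refine LipschitzOnWith.of_dist_le_mul fun u hu w hw ↦ ?_
  simp only [mem_ofPred_eq] at hu hw
  set d := dist u w
  have h1 : |u.1 - w.1| ≤ d :=
    (Real.dist_eq _ _).symm.trans_le ((le_max_left _ _).trans_eq Prod.dist_eq.symm)
  have h2 : |u.2 - w.2| ≤ d :=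
    (Real.dist_eq _ _).symm.trans_le ((le_max_right _ _).trans_eq Prod.dist_eq.symm)
  have habs : ∀ x : ℝ, x ^ 2 ≤ 3 / 4 → |x| ≤ 1 := fun x hx ↦
    abs_le_one_iff_mul_self_le_one.2 (by nlinarith)
  have h3 : |√(1 - u.1 ^ 2 - u.2 ^ 2) - √(1 - w.1 ^ 2 - w.2 ^ 2)| ≤ 4 * d := by
    refine (abs_sqrt_sub_sqrt_le (by linarith) (by linarith)).trans ?_
    have e : 1 - u.1 ^ 2 - u.2 ^ 2 - (1 - w.1 ^ 2 - w.2 ^ 2)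
        = (w.1 - u.1) * (w.1 + u.1) + (w.2 - u.2) * (w.2 + u.2) := by ring
    have hs1 : |w.1 + u.1| ≤ 2 := (abs_add_le _ _).trans (by
      linarith [habs w.1 (by nlinarith), habs u.1 (by nlinarith)])
    have hs2 : |w.2 + u.2| ≤ 2 := (abs_add_le _ _).trans (by
      linarith [habs w.2 (by nlinarith), habs u.2 (by nlinarith)])
    rw [e]
    refine (abs_add_le _ _).trans ?_
    rw [abs_mul, abs_mul, abs_sub_comm w.1, abs_sub_comm w.2]
    nlinarith [abs_nonneg (u.1 - w.1), abs_nonneg (u.2 - w.2), abs_nonneg (w.1 + u.1),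
      abs_nonneg (w.2 + u.2)]
  rw [EuclideanSpace.dist_eq, Fin.sum_univ_three]
  refine (Real.sqrt_le_sqrt ?_).trans_eq (Real.sqrt_sq (by positivity))
  simp only [sphereChart, Real.dist_eq, Matrix.cons_val_zero, Matrix.cons_val_one,
    Matrix.cons_val, NNReal.coe_ofNat]
  nlinarith [pow_le_pow_left₀ (abs_nonneg _) h1 2, pow_le_pow_left₀ (abs_nonneg _) h2 2,
    pow_le_pow_left₀ (abs_nonneg _) h3 2]

lemma sphere_inter_closedBall_northPole_subset {t : ℝ} (ht : t ≤ 1 / 2) :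
    𝕊 ∩ closedBall northPole t ⊆
      sphereChart '' ({u : ℝ × ℝ | u.1 ^ 2 + u.2 ^ 2 ≤ 3 / 4} ∩ closedBall 0 t) := by
  rintro x ⟨hxS, hxt⟩
  have hx : x 0 ^ 2 + x 1 ^ 2 + x 2 ^ 2 = 1 := by
    rw [← norm_sq_eq_sum_three, mem_sphere_zero_iff_norm.1 hxS, one_pow]
  have hcoord : ∀ i, |x i - northPole i| ≤ t := fun i ↦ (Real.dist_eq _ _).symm.trans_le
    ((PiLp.dist_apply_le x northPole i).trans (mem_closedBall.1 hxt))
  have h0 : |x 0| ≤ t := by simpa [northPole] using hcoord 0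
  have h1 : |x 1| ≤ t := by simpa [northPole] using hcoord 1
  have h2 : |x 2 - 1| ≤ t := by simpa [northPole] using hcoord 2
  have hx2 : 1 / 2 ≤ x 2 := by linarith [(abs_le.1 h2).1]
  refine ⟨(x 0, x 1), ⟨by simp only [mem_ofPred_eq]; nlinarith, ?_⟩, ?_⟩
  · rw [mem_closedBall, Prod.dist_eq]
    simpa using And.intro h0 h1
  · have hx2' : √(1 - x 0 ^ 2 - x 1 ^ 2) = x 2 := by
      rw [show 1 - x 0 ^ 2 - x 1 ^ 2 = x 2 ^ 2 by linarith, Real.sqrt_sq (by linarith)]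
    ext i
    fin_cases i <;> simp [sphereChart, hx2']

lemma hausdorffMeasure_sphere_inter_closedBall_northPole_le {t : ℝ} (ht₀ : 0 ≤ t) (ht : t ≤ 1 / 2) :
    μH[2] (𝕊 ∩ closedBall northPole t) ≤ ENNReal.ofReal (100 * t ^ 2) := by
  calc μH[2] (𝕊 ∩ closedBall northPole t)
      ≤ μH[2] (sphereChart '' ({u : ℝ × ℝ | u.1 ^ 2 + u.2 ^ 2 ≤ 3 / 4} ∩ closedBall 0 t)) :=
        measure_mono (sphere_inter_closedBall_northPole_subset ht)
    _ ≤ (5 : NNReal) ^ (2 : ℝ) * μH[2] ({u : ℝ × ℝ | u.1 ^ 2 + u.2 ^ 2 ≤ 3 / 4} ∩ closedBall 0 t) :=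
        (lipschitzOnWith_sphereChart.mono inter_subset_left).hausdorffMeasure_image_le
          zero_le_two
    _ ≤ (5 : NNReal) ^ (2 : ℝ) * volume (closedBall (0 : ℝ × ℝ) t) := by
        rw [← hausdorffMeasure_prod_real]
        gcongr
        exact inter_subset_right
    _ = ENNReal.ofReal (100 * t ^ 2) := by
        have h25 : ((5 : NNReal) : ℝ≥0∞) ^ (2 : ℝ) = ENNReal.ofReal 25 := by norm_num
        rw [← Prod.mk_zero_zero, ← closedBall_prod_same, Measure.volume_eq_prod, Measure.prod_prod,
          Real.volume_closedBall, h25, ← ENNReal.ofReal_mul (by positivity),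
          ← ENNReal.ofReal_mul (by positivity)]
        ring_nf

theorem hausdorffMeasure_sphere_inter_closedBall_eq_of_norm_eq {F : Type*}
    [NormedAddCommGroup F] [InnerProductSpace ℝ F] [MeasurableSpace F] [BorelSpace F]
    {p q : F} (h : ‖p‖ = ‖q‖) (d R r : ℝ) :
    μH[d] (sphere (0 : F) R ∩ closedBall p r) = μH[d] (sphere (0 : F) R ∩ closedBall q r) := by
  let e := Submodule.reflection (ℝ ∙ (p - q))ᗮ
  rw [← e.toIsometryEquiv.hausdorffMeasure_image d]
  simp [image_inter e.injective, e, Submodule.reflection_sub h]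

lemma hausdorffMeasure_sphere_inter_closedBall_le_of_le (p : E3) {r : ℝ} (hr₀ : 0 ≤ r)
    (hr : r ≤ 1 / 4) : μH[2] (𝕊 ∩ closedBall p r) ≤ ENNReal.ofReal (400 * r ^ 2) := by
  rcases (𝕊 ∩ closedBall p r).eq_empty_or_nonempty with h | ⟨x, hxS, hxp⟩
  · simp [h]
  have hnorm : ‖x‖ = ‖northPole‖ := by
    rw [mem_sphere_zero_iff_norm.1 hxS, northPole, PiLp.norm_single, norm_one]
  calc μH[2] (𝕊 ∩ closedBall p r) ≤ μH[2] (𝕊 ∩ closedBall x (2 * r)) :=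
        measure_mono (inter_subset_inter_right _ (closedBall_subset_closedBall'
          (by rw [dist_comm]; linarith [mem_closedBall.1 hxp])))
    _ = μH[2] (𝕊 ∩ closedBall northPole (2 * r)) :=
        hausdorffMeasure_sphere_inter_closedBall_eq_of_norm_eq hnorm _ _ _
    _ ≤ ENNReal.ofReal (100 * (2 * r) ^ 2) :=
        hausdorffMeasure_sphere_inter_closedBall_northPole_le (by positivity) (by linarith)
    _ = ENNReal.ofReal (400 * r ^ 2) := by ring_nf

lemma hausdorffMeasure_sphere_lt_top : μH[2] 𝕊 < ⊤ :=
  (isCompact_sphere 0 1).measure_lt_top_of_nhdsWithin fun x _ ↦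
    ⟨𝕊 ∩ closedBall x (1 / 4), inter_mem_nhdsWithin _ (closedBall_mem_nhds x (by norm_num)),
      (hausdorffMeasure_sphere_inter_closedBall_le_of_le x (by norm_num) le_rfl).trans_lt
        ENNReal.ofReal_lt_top⟩

lemma hausdorffMeasure_sphere_pos : 0 < μH[2] 𝕊 := by
  let π : E3 → ℝ × ℝ := fun x ↦ (x 0, x 1)
  have hπ : LipschitzWith 1 π := LipschitzWith.of_dist_le_mul fun x y ↦ by
    rw [NNReal.coe_one, one_mul, Prod.dist_eq]
    exact max_le (PiLp.dist_apply_le x y 0) (PiLp.dist_apply_le x y 1)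
  have hsub : closedBall (0 : ℝ × ℝ) (1 / 2) ⊆ π '' 𝕊 := by
    intro u hu
    rw [mem_closedBall, Prod.dist_eq, max_le_iff, Prod.fst_zero, Prod.snd_zero,
      Real.dist_0_eq_abs, Real.dist_0_eq_abs] at hu
    have hu1 : u.1 ^ 2 + u.2 ^ 2 ≤ 1 := by
      nlinarith [sq_abs u.1, sq_abs u.2, abs_nonneg u.1, abs_nonneg u.2]
    exact ⟨sphereChart u, sphereChart_mem_sphere hu1, by simp [π, sphereChart]⟩
  calc (0 : ℝ≥0∞) < volume (closedBall (0 : ℝ × ℝ) (1 / 2)) :=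
        measure_closedBall_pos volume 0 (by norm_num)
    _ = μH[2] (closedBall (0 : ℝ × ℝ) (1 / 2)) := by rw [hausdorffMeasure_prod_real]
    _ ≤ μH[2] (π '' 𝕊) := measure_mono hsub
    _ ≤ μH[2] 𝕊 := by simpa using hπ.hausdorffMeasure_image_le zero_le_two 𝕊

lemma exists_hausdorffMeasure_sphere_inter_closedBall_le :
    ∃ K, 0 ≤ K ∧ ∀ (p : E3) r, 0 ≤ r → μH[2] (𝕊 ∩ closedBall p r) ≤ ENNReal.ofReal (K * r ^ 2) := by
  set M := (μH[2] 𝕊).toReal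
  refine ⟨400 + 16 * M, by positivity, fun p r hr₀ ↦ ?_⟩
  rcases le_or_gt r (1 / 4) with hr | hr
  · refine (hausdorffMeasure_sphere_inter_closedBall_le_of_le p hr₀ hr).trans
      (ENNReal.ofReal_le_ofReal ?_)
    nlinarith [ENNReal.toReal_nonneg (a := μH[2] 𝕊), sq_nonneg r]
  · calc μH[2] (𝕊 ∩ closedBall p r) ≤ μH[2] 𝕊 := measure_mono inter_subset_left
      _ = ENNReal.ofReal M := (ENNReal.ofReal_toReal hausdorffMeasure_sphere_lt_top.ne).symm
      _ ≤ ENNReal.ofReal ((400 + 16 * M) * r ^ 2) := by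
        have hM : 0 ≤ M := ENNReal.toReal_nonneg
        have hr2 : 1 / 16 ≤ r ^ 2 := by nlinarith
        exact ENNReal.ofReal_le_ofReal (by nlinarith [mul_le_mul_of_nonneg_left hr2 hM])

lemma rpow_neg_le_five_mul_rpow_neg {x R s : ℝ} (hR : 0 < R) (hRx : R ≤ 5 * x) (hs₀ : 0 ≤ s)
    (hs : s ≤ 1) : x ^ (-s) ≤ 5 * R ^ (-s) :=
  calc x ^ (-s) ≤ (R / 5) ^ (-s) :=
        Real.rpow_le_rpow_of_nonpos (by positivity) (by linarith) (by linarith)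
    _ = 5 ^ s * R ^ (-s) := by
        rw [Real.div_rpow hR.le (by norm_num), Real.rpow_neg (by norm_num : (0 : ℝ) ≤ 5),
          div_inv_eq_mul, mul_comm]
    _ ≤ 5 * R ^ (-s) := by
        gcongr
        exact Real.rpow_le_self_of_one_le (by norm_num) hs

lemma dist_rpow_neg_le_of_two_lt_norm {F : Type*} [NormedAddCommGroup F] {ω c : F} {s : ℝ}
    (hω : ‖ω‖ = 1) (hc : 2 < ‖c‖) (hs₀ : 0 ≤ s) (hs₂ : s ≤ 2) :
    dist ω c ^ (-s) ≤ 5 * (1 + ‖c‖ ^ 2) ^ (-(s / 2)) := by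
  have hdist : ‖c‖ - 1 ≤ dist ω c := by
    rw [dist_comm, dist_eq_norm, ← hω]
    exact norm_sub_norm_le c ω
  rw [← Real.sqrt_sq (dist_nonneg), Real.sqrt_eq_rpow, ← Real.rpow_mul (sq_nonneg _),
    show 1 / 2 * -s = -(s / 2) by ring]
  exact rpow_neg_le_five_mul_rpow_neg (by positivity) (by nlinarith) (by positivity) (by linarith)

lemma exists_lintegral_sphere_dist_rpow_neg_le {s : ℝ} (hs₀ : 0 < s) (hs₂ : s < 2) :
    ∃ C, 0 < C ∧ ∀ c : E3, ∫⁻ ω in 𝕊, ENNReal.ofReal (dist ω c ^ (-s)) ∂μH[2] ≤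
      ENNReal.ofReal (C * (1 + ‖c‖ ^ 2) ^ (-(s / 2))) := by
  obtain ⟨K, hK, hcap⟩ := exists_hausdorffMeasure_sphere_inter_closedBall_le
  set M := (μH[2] 𝕊).toReal
  have hM : 0 < M := ENNReal.toReal_pos hausdorffMeasure_sphere_pos.ne'
    hausdorffMeasure_sphere_lt_top.ne
  have hq : 0 ≤ K * 2 ^ s / (1 - 2 ^ s / 2 ^ 2) := by
    refine div_nonneg (by positivity) (sub_nonneg.2 ((div_le_one (by positivity)).2 ?_))
    exact_mod_cast Real.rpow_le_rpow_of_exponent_le one_le_two hs₂.le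
  set A := M + K * 2 ^ s / (1 - 2 ^ s / 2 ^ 2)
  have hA : 0 < A := add_pos_of_pos_of_nonneg hM hq
  refine ⟨5 * A, by positivity, fun c ↦ ?_⟩
  have hR : 0 < 1 + ‖c‖ ^ 2 := by positivity
  rcases le_or_gt ‖c‖ 2 with hc | hc
  · have hμ : ∀ r, 0 < r → r ≤ 1 →
        μH[2].restrict 𝕊 (closedBall c r) ≤ ENNReal.ofReal (K * r ^ 2) := fun r hr _ ↦ by
      rw [Measure.restrict_apply measurableSet_closedBall, inter_comm]
      exact hcap c r hr.le
    calc ∫⁻ ω in 𝕊, ENNReal.ofReal (dist ω c ^ (-s)) ∂μH[2]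
        ≤ μH[2].restrict 𝕊 univ + ENNReal.ofReal (K * 2 ^ s / (1 - 2 ^ s / 2 ^ 2)) :=
          lintegral_dist_rpow_neg_le_of_measure_closedBall_le hK hs₀ (by exact_mod_cast hs₂) hμ
      _ = ENNReal.ofReal A := by
          rw [Measure.restrict_apply_univ, ENNReal.ofReal_add ENNReal.toReal_nonneg hq,
            ENNReal.ofReal_toReal hausdorffMeasure_sphere_lt_top.ne]
      _ ≤ ENNReal.ofReal (5 * A * (1 + ‖c‖ ^ 2) ^ (-(s / 2))) := by
          have h := rpow_neg_le_five_mul_rpow_neg (x := 1) (s := s / 2) hR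
            (by nlinarith [norm_nonneg c]) (by positivity) (by linarith)
          rw [Real.one_rpow] at h
          exact ENNReal.ofReal_le_ofReal (by nlinarith)
  · calc ∫⁻ ω in 𝕊, ENNReal.ofReal (dist ω c ^ (-s)) ∂μH[2]
        ≤ ∫⁻ _ in 𝕊, ENNReal.ofReal (5 * (1 + ‖c‖ ^ 2) ^ (-(s / 2))) ∂μH[2] :=
          setLIntegral_mono measurable_const fun ω hω ↦ ENNReal.ofReal_le_ofReal
            (dist_rpow_neg_le_of_two_lt_norm (mem_sphere_zero_iff_norm.1 hω) hc hs₀.le hs₂.le)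
      _ = ENNReal.ofReal (M * (5 * (1 + ‖c‖ ^ 2) ^ (-(s / 2)))) := by
          rw [setLIntegral_const, ENNReal.ofReal_mul ENNReal.toReal_nonneg,
            ENNReal.ofReal_toReal hausdorffMeasure_sphere_lt_top.ne, mul_comm]
      _ ≤ ENNReal.ofReal (5 * A * (1 + ‖c‖ ^ 2) ^ (-(s / 2))) := by
          refine ENNReal.ofReal_le_ofReal ?_
          have : M ≤ A := le_add_of_nonneg_right hq
          have : 0 ≤ (1 + ‖c‖ ^ 2) ^ (-(s / 2)) := by positivity
          nlinarith

lemma exists_lintegral_sphere_norm_sub_smul_rpow_neg_le {s : ℝ} (hs₀ : 0 < s) (hs₂ : s < 2) :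
    ∃ C, 0 < C ∧ ∀ (v : E3) (ρ : ℝ), 0 < ρ →
      ∫⁻ ω in 𝕊, ENNReal.ofReal (‖v - ρ • ω‖ ^ (-s)) ∂μH[2] ≤
        ENNReal.ofReal (C * (‖v‖ ^ 2 + ρ ^ 2) ^ (-(s / 2))) := by
  obtain ⟨C, hC₀, hC⟩ := exists_lintegral_sphere_dist_rpow_neg_le hs₀ hs₂
  refine ⟨C, hC₀, fun v ρ hρ ↦ ?_⟩
  have hscale : ∀ ω : E3, ‖v - ρ • ω‖ ^ (-s) = ρ ^ (-s) * dist ω (ρ⁻¹ • v) ^ (-s) := fun ω ↦ by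
    have h : v - ρ • ω = ρ • (ρ⁻¹ • v - ω) := by rw [smul_sub, smul_inv_smul₀ hρ.ne']
    rw [h, norm_smul, Real.norm_of_nonneg hρ.le, ← dist_eq_norm, dist_comm,
      Real.mul_rpow hρ.le dist_nonneg]
  have hρs : ρ ^ (-s) = (ρ ^ 2) ^ (-(s / 2)) := by
    rw [← Real.rpow_natCast, ← Real.rpow_mul hρ.le]
    ring_nf
  calc ∫⁻ ω in 𝕊, ENNReal.ofReal (‖v - ρ • ω‖ ^ (-s)) ∂μH[2]
      = ENNReal.ofReal (ρ ^ (-s)) * ∫⁻ ω in 𝕊, ENNReal.ofReal (dist ω (ρ⁻¹ • v) ^ (-s)) ∂μH[2] := by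
        simp_rw [hscale, ENNReal.ofReal_mul (Real.rpow_nonneg hρ.le _)]
        exact lintegral_const_mul _ (by fun_prop)
    _ ≤ ENNReal.ofReal (ρ ^ (-s)) * ENNReal.ofReal (C * (1 + ‖ρ⁻¹ • v‖ ^ 2) ^ (-(s / 2))) := by
        gcongr
        exact hC _
    _ = ENNReal.ofReal (C * (‖v‖ ^ 2 + ρ ^ 2) ^ (-(s / 2))) := by
        rw [← ENNReal.ofReal_mul (by positivity), hρs, mul_left_comm,
          ← Real.mul_rpow (by positivity) (by positivity), norm_smul, norm_inv, Real.norm_eq_abs,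
          abs_of_pos hρ]
        congr 3
        field_simp
        ring

lemma inv_rpow_mul_rpow_le {a b R s : ℝ} (ha : 0 ≤ a) (hb : 0 ≤ b) (hR : 0 < R) (hs : 0 ≤ s)
    (hab : a ^ 2 + b ^ 2 = 2 * R) : (a ^ s * b ^ s)⁻¹ ≤ R ^ (-(s / 2)) * (a ^ (-s) + b ^ (-s)) := by
  wlog hle : a ≤ b generalizing a b
  · rw [mul_comm, add_comm]
    exact this hb ha (by linarith) (le_of_not_ge hle)
  rcases (Real.rpow_nonneg ha s).eq_or_lt with h0 | hpos
  · rw [← h0, zero_mul, _root_.inv_zero]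
    positivity
  have hbR : R ^ (s / 2) ≤ b ^ s := by
    calc R ^ (s / 2) ≤ (b ^ 2) ^ (s / 2) := Real.rpow_le_rpow hR.le (by nlinarith) (by positivity)
      _ = b ^ s := by rw [← Real.rpow_natCast, ← Real.rpow_mul hb]; ring_nf
  calc (a ^ s * b ^ s)⁻¹ ≤ (a ^ s * R ^ (s / 2))⁻¹ := by gcongr
    _ = R ^ (-(s / 2)) * a ^ (-s) := by
        rw [mul_inv, Real.rpow_neg ha, Real.rpow_neg hR.le, mul_comm]
    _ ≤ R ^ (-(s / 2)) * (a ^ (-s) + b ^ (-s)) := by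
        gcongr
        exact le_add_of_nonneg_right (Real.rpow_nonneg hb _)

lemma rpow_neg_le_inv_rpow_mul_rpow {a b R s : ℝ} (ha : 0 < a) (hb : 0 < b) (hs : 0 ≤ s)
    (hab : a ^ 2 + b ^ 2 = 2 * R) : R ^ (-s) ≤ (a ^ s * b ^ s)⁻¹ := by
  rw [← Real.mul_rpow ha.le hb.le, Real.rpow_neg (by nlinarith)]
  gcongr
  nlinarith [sq_nonneg (a - b)]

lemma norm_sub_smul_sq_add_norm_add_smul_sq {F : Type*} [NormedAddCommGroup F]
    [InnerProductSpace ℝ F] (ξ : F) {ω : F} (hω : ‖ω‖ = 1) (ρ : ℝ) :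
    ‖ξ - ρ • ω‖ ^ 2 + ‖ξ + ρ • ω‖ ^ 2 = 2 * (‖ξ‖ ^ 2 + ρ ^ 2) := by
  have h := parallelogram_law_with_norm ℝ ξ (ρ • ω)
  rw [norm_smul, hω, mul_one, Real.norm_eq_abs] at h
  nlinarith [sq_abs ρ]

def sphereIntegrand (p s : ℝ) (ξ : E3) (ρ : ℝ) (ω : E3) : ℝ :=
  (‖ξ‖ ^ 2 + ρ ^ 2) ^ p / (‖ξ - ρ • ω‖ ^ s * ‖ξ + ρ • ω‖ ^ s)

section sphereIntegrand

variable {p s : ℝ} {ξ : E3} {ρ : ℝ}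

lemma sphereIntegrand_nonneg (ω : E3) : 0 ≤ sphereIntegrand p s ξ ρ ω := by
  unfold sphereIntegrand
  positivity

lemma measurable_sphereIntegrand : Measurable (sphereIntegrand p s ξ ρ) := by
  unfold sphereIntegrand
  fun_prop

lemma sphereIntegrand_le (hs : 0 ≤ s) (hρ : 0 < ρ) {ω : E3} (hω : ω ∈ 𝕊) :
    sphereIntegrand p s ξ ρ ω ≤ (‖ξ‖ ^ 2 + ρ ^ 2) ^ p * (‖ξ‖ ^ 2 + ρ ^ 2) ^ (-(s / 2)) *
      (‖ξ - ρ • ω‖ ^ (-s) + ‖-ξ - ρ • ω‖ ^ (-s)) := by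
  rw [mul_assoc, show -ξ - ρ • ω = -(ξ + ρ • ω) by abel, norm_neg, sphereIntegrand,
    div_eq_mul_inv]
  exact mul_le_mul_of_nonneg_left (inv_rpow_mul_rpow_le (norm_nonneg _) (norm_nonneg _)
    (by positivity) hs (norm_sub_smul_sq_add_norm_add_smul_sq ξ (mem_sphere_zero_iff_norm.1 hω) ρ))
    (by positivity)

lemma rpow_sub_le_sphereIntegrand (hs : 0 ≤ s) (hρ : 0 < ρ) {ω : E3} (hω : ω ∈ 𝕊)
    (h₁ : ρ • ω ≠ ξ) (h₂ : ρ • ω ≠ -ξ) :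
    (‖ξ‖ ^ 2 + ρ ^ 2) ^ (p - s) ≤ sphereIntegrand p s ξ ρ ω := by
  rw [sub_eq_add_neg, Real.rpow_add (by positivity), sphereIntegrand, div_eq_mul_inv]
  refine mul_le_mul_of_nonneg_left (rpow_neg_le_inv_rpow_mul_rpow ?_ ?_ hs
    (norm_sub_smul_sq_add_norm_add_smul_sq ξ (mem_sphere_zero_iff_norm.1 hω) ρ)) (by positivity)
  · exact norm_pos_iff.2 (sub_ne_zero.2 h₁.symm)
  · exact norm_pos_iff.2 fun h ↦ h₂ (eq_neg_of_add_eq_zero_right h)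

variable (p) in
lemma exists_lintegral_sphereIntegrand_le (hs₀ : 0 < s) (hs₂ : s < 2) :
    ∃ C, 0 < C ∧ ∀ (ξ : E3) (ρ : ℝ), 0 < ρ →
      ∫⁻ ω in 𝕊, ENNReal.ofReal (sphereIntegrand p s ξ ρ ω) ∂μH[2] ≤
        ENNReal.ofReal (C * (‖ξ‖ ^ 2 + ρ ^ 2) ^ (p - s)) := by
  obtain ⟨C, hC₀, hC⟩ := exists_lintegral_sphere_norm_sub_smul_rpow_neg_le hs₀ hs₂
  refine ⟨2 * C, by positivity, fun ξ ρ hρ ↦ ?_⟩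
  set R := ‖ξ‖ ^ 2 + ρ ^ 2
  have hR : 0 < R := by positivity
  calc ∫⁻ ω in 𝕊, ENNReal.ofReal (sphereIntegrand p s ξ ρ ω) ∂μH[2]
      ≤ ∫⁻ ω in 𝕊, ENNReal.ofReal (R ^ p * R ^ (-(s / 2))) *
          (ENNReal.ofReal (‖ξ - ρ • ω‖ ^ (-s)) + ENNReal.ofReal (‖-ξ - ρ • ω‖ ^ (-s))) ∂μH[2] := by
        refine setLIntegral_mono (by fun_prop) fun ω hω ↦ ?_
        rw [← ENNReal.ofReal_add (by positivity) (by positivity),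
          ← ENNReal.ofReal_mul (by positivity)]
        exact ENNReal.ofReal_le_ofReal (sphereIntegrand_le hs₀.le hρ hω)
    _ ≤ ENNReal.ofReal (R ^ p * R ^ (-(s / 2))) *
          (ENNReal.ofReal (C * R ^ (-(s / 2))) + ENNReal.ofReal (C * R ^ (-(s / 2)))) := by
        rw [lintegral_const_mul _ (by fun_prop), lintegral_add_left (by fun_prop)]
        gcongr
        · exact hC ξ ρ hρ
        · simpa only [norm_neg] using hC (-ξ) ρ hρ
    _ = ENNReal.ofReal (2 * C * R ^ (p - s)) := by
        rw [← ENNReal.ofReal_add (by positivity) (by positivity),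
          ← ENNReal.ofReal_mul (by positivity)]
        congr 1
        rw [sub_eq_add_neg, Real.rpow_add hR, show -s = -(s / 2) + -(s / 2) by ring,
          Real.rpow_add hR]
        ring

lemma measureReal_sphere_mul_rpow_le_setIntegral_sphereIntegrand (hs₀ : 0 < s) (hs₂ : s < 2)
    (hρ : 0 < ρ) :
    μH[2].real 𝕊 * (‖ξ‖ ^ 2 + ρ ^ 2) ^ (p - s) ≤ ∫ ω in 𝕊, sphereIntegrand p s ξ ρ ω ∂μH[2] := by
  have := Measure.nullSingletonClass_hausdorff E3 two_pos
  obtain ⟨C, -, hC⟩ := exists_lintegral_sphereIntegrand_le p hs₀ hs₂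
  have hint : IntegrableOn (sphereIntegrand p s ξ ρ) 𝕊 μH[2] :=
    ⟨measurable_sphereIntegrand.aestronglyMeasurable,
      (hasFiniteIntegral_iff_ofReal (ae_of_all _ sphereIntegrand_nonneg)).2
        ((hC ξ ρ hρ).trans_lt ENNReal.ofReal_lt_top)⟩
  -- the pointwise bound can only fail at the two points `ω = ± ρ⁻¹ • ξ`
  have hae : ∀ᵐ ω ∂μH[2].restrict 𝕊,
      (‖ξ‖ ^ 2 + ρ ^ 2) ^ (p - s) ≤ sphereIntegrand p s ξ ρ ω := by
    filter_upwards [ae_restrict_mem isClosed_sphere.measurableSet,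
      ae_restrict_of_ae (μH[2].ae_ne (ρ⁻¹ • ξ)),
      ae_restrict_of_ae (μH[2].ae_ne (-(ρ⁻¹ • ξ)))] with ω hω h₁ h₂
    refine rpow_sub_le_sphereIntegrand hs₀.le hρ hω (fun h ↦ h₁ ?_) (fun h ↦ h₂ ?_)
    · rw [← h, inv_smul_smul₀ hρ.ne']
    · rw [← smul_neg, ← h, inv_smul_smul₀ hρ.ne']
  calc μH[2].real 𝕊 * (‖ξ‖ ^ 2 + ρ ^ 2) ^ (p - s)
      = ∫ _ in 𝕊, (‖ξ‖ ^ 2 + ρ ^ 2) ^ (p - s) ∂μH[2] := by rw [setIntegral_const, smul_eq_mul]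
    _ ≤ ∫ ω in 𝕊, sphereIntegrand p s ξ ρ ω ∂μH[2] :=
        integral_mono_ae (integrableOn_const hausdorffMeasure_sphere_lt_top.ne) hint hae

end sphereIntegrand

/-- two-sided bound for the spherical average `I²_{β,γ}`. -/
theorem spherical_average_two_sided
    (β γ : ℝ) (hβ : 0 < β) (hγ : 0 ≤ γ) (hβγ : β + γ < 1) :
    ∃ c C : ℝ, 0 < c ∧ 0 < C ∧
      ∀ (ξ : E3) (ρ : ℝ), 0 < ρ →
        c * (‖ξ‖ ^ 2 + ρ ^ 2) ^ (-(2 * β)) ≤ Isq β γ ξ ρ ∧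
        Isq β γ ξ ρ ≤ C * (‖ξ‖ ^ 2 + ρ ^ 2) ^ (-(2 * β)) := by
  have hs₀ : 0 < 2 * β + 2 * γ := by linarith
  have hs₂ : 2 * β + 2 * γ < 2 := by linarith
  obtain ⟨C, hC₀, hC⟩ := exists_lintegral_sphereIntegrand_le (2 * γ) hs₀ hs₂
  refine ⟨μH[2].real 𝕊, C, ENNReal.toReal_pos hausdorffMeasure_sphere_pos.ne'
    hausdorffMeasure_sphere_lt_top.ne, hC₀, fun ξ ρ hρ ↦ ?_⟩
  have hIsq : Isq β γ ξ ρ = ∫ ω in 𝕊, sphereIntegrand (2 * γ) (2 * β + 2 * γ) ξ ρ ω ∂μH[2] := rfl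
  rw [hIsq, show -(2 * β) = 2 * γ - (2 * β + 2 * γ) by ring]
  refine ⟨measureReal_sphere_mul_rpow_le_setIntegral_sphereIntegrand hs₀ hs₂ hρ, ?_⟩
  rw [integral_eq_lintegral_of_nonneg_ae (ae_of_all _ sphereIntegrand_nonneg)
    measurable_sphereIntegrand.aestronglyMeasurable]
  exact ENNReal.toReal_le_of_le_ofReal (by positivity) (hC ξ ρ hρ)

end
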